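/- arXiv:1301.6514 — 2 statements merged into one kernel-verified Lean document; each statement's English description precedes it below -/
import Mathlib

section
/- If ξ = c₁·x + c₂·y + c₃ and η = c₄·x + c₅·y + c₆ satisfy the linearized symmetry condition for h(x,y) = y + e^x/y for all x and all y ≠ 0, then c₁ = c₂ = c₄ = c₆ = 0 and c₃ = 2·c₅. -/
/-!
Evaluated at `x = 0` and multiplied by `y²`, the symmetry condition becomes a quartic polynomial
identity in `y` holding for every `y ≠ 0`. Its five coefficients must therefore vanish, and these
five linear equations in `c₁, …, c₆` are exactly the claim.
-/

open Real Polynomial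

theorem quartic_coeffs_eq_zero_of_forall_ne_zero {R : Type*} [CommRing R] [IsDomain R]
    [Infinite R] {a b c d e : R}
    (h : ∀ y : R, y ≠ 0 → a * y ^ 4 + b * y ^ 3 + c * y ^ 2 + d * y + e = 0) :
    a = 0 ∧ b = 0 ∧ c = 0 ∧ d = 0 ∧ e = 0 := by
  set p : R[X] := C a * X ^ 4 + C b * X ^ 3 + C c * X ^ 2 + C d * X + C e
  have hp : p = 0 := by
    refine eq_zero_of_infinite_isRoot p
      ((Set.infinite_univ.sdiff (Set.finite_singleton 0)).mono ?_)
    rintro y ⟨-, hy⟩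
    simpa [p] using h y hy
  refine ⟨?_, ?_, ?_, ?_, ?_⟩
  · simpa [p] using congrArg (coeff · 4) hp
  · simpa [p] using congrArg (coeff · 3) hp
  · simpa [p] using congrArg (coeff · 2) hp
  · simpa [p] using congrArg (coeff · 1) hp
  · simpa [p] using congrArg (coeff · 0) hp

theorem hasDerivAt_add_const_div (c : ℝ) {y : ℝ} (hy : y ≠ 0) :
    HasDerivAt (fun t => t + c / t) (1 - c / y ^ 2) y :=
  ((hasDerivAt_id' y).add ((hasDerivAt_const y c).div (hasDerivAt_id' y) hy)).congr_deriv
    (by field_simp; ring)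

/-- If ξ = c₁x + c₂y + c₃ and η = c₄x + c₅y + c₆ satisfy the linearized symmetry
condition for h(x,y) = y + e^x/y for all x and all y ≠ 0, then
c₁ = c₂ = c₄ = c₆ = 0 and c₃ = 2c₅. -/
theorem lsc_ansatz_bernoulli (c₁ c₂ c₃ c₄ c₅ c₆ : ℝ)
    (ξ : ℝ → ℝ → ℝ) (η : ℝ → ℝ → ℝ) (h : ℝ → ℝ → ℝ)
    (hξ : ξ = fun x y => c₁ * x + c₂ * y + c₃)
    (hη : η = fun x y => c₄ * x + c₅ * y + c₆)
    (hh : h = fun x y => y + Real.exp x / y)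
    (hlsc : ∀ x y : ℝ, y ≠ 0 →
      deriv (fun x' => η x' y) x - deriv (fun y' => ξ x y') y * (h x y) ^ 2
        + (deriv (fun y' => η x y') y - deriv (fun x' => ξ x' y) x) * h x y
        - (ξ x y * deriv (fun x' => h x' y) x + η x y * deriv (fun y' => h x y') y) = 0) :
    c₁ = 0 ∧ c₂ = 0 ∧ c₄ = 0 ∧ c₆ = 0 ∧ c₃ = 2 * c₅ := by
  subst hξ hη hh
  have hquartic : ∀ y : ℝ, y ≠ 0 → -c₂ * y ^ 4 + -c₁ * y ^ 3 + (c₄ - 3 * c₂ - c₆) * y ^ 2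
      + (2 * c₅ - c₁ - c₃) * y + (c₆ - c₂) = 0 := by
    intro y hy
    have hcond := hlsc 0 y hy
    simp only [deriv_add_const, deriv_const_add, deriv_const_mul_id,
      (hasDerivAt_add_const_div _ hy).deriv, deriv_div_const, Real.deriv_exp,
      Real.exp_zero] at hcond
    field_simp at hcond
    linear_combination hcond
  obtain ⟨h₄, h₃, h₂, h₁, h₀⟩ := quartic_coeffs_eq_zero_of_forall_ne_zero hquartic
  refine ⟨by linarith, by linarith, by linarith, by linarith, by linarith⟩
end

section
/- If ξ = c₁·x + c₂·y + c₃ and η = c₄·x + c₅·y + c₆ satisfy the linearized symmetry condition for h(x,y) = y/(x−y) for all (x,y) with x ≠ y and y ≠ 0, then c₃ = c₄ = c₆ = 0 and c₁ = c₅. -/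
/-! Multiplying the condition by (x − y)² turns it into the polynomial identity
−2c₄xy + (c₁ + c₄ − c₅)y² + c₃y − c₆x = 0 off the lines x = y and y = 0, and a polynomial
vanishing there has zero coefficients. -/

theorem deriv_div_sub_left {x y : ℝ} (hxy : x ≠ y) :
    deriv (fun x' => y / (x' - y)) x = -y / (x - y) ^ 2 := by
  have hx : HasDerivAt (fun x' : ℝ => x' - y) 1 x := (hasDerivAt_id x).sub_const y
  exact ((hasDerivAt_const x y).div hx (sub_ne_zero.2 hxy)).deriv.trans (by ring)

theorem deriv_div_sub_right {x y : ℝ} (hxy : x ≠ y) :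
    deriv (fun y' => y' / (x - y')) y = x / (x - y) ^ 2 := by
  have hy : HasDerivAt (fun y' : ℝ => x - y') (-1) y := (hasDerivAt_id y).const_sub x
  exact ((hasDerivAt_id y).div hy (sub_ne_zero.2 hxy)).deriv.trans (by simp only [id]; ring)

theorem coeffs_eq_zero_of_forall_ne_of_ne_zero {a b c d : ℝ}
    (hP : ∀ x y : ℝ, x ≠ y → y ≠ 0 → a * (x * y) + b * y ^ 2 + c * y + d * x = 0) :
    a = 0 ∧ b = 0 ∧ c = 0 ∧ d = 0 := by
  have e₁ := hP 2 1 (by norm_num) (by norm_num)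
  have e₂ := hP 3 1 (by norm_num) (by norm_num)
  have e₃ := hP 2 (-1) (by norm_num) (by norm_num)
  have e₄ := hP 1 (-1) (by norm_num) (by norm_num)
  refine ⟨?_, ?_, ?_, ?_⟩ <;> linarith

theorem linearizedSymmetry_affine_y_div_sub_eq (c₁ c₂ c₃ c₄ c₅ c₆ : ℝ) {x y : ℝ} (hxy : x ≠ y) :
    deriv (fun x' => c₄ * x' + c₅ * y + c₆) x
        - deriv (fun y' => c₁ * x + c₂ * y' + c₃) y * (y / (x - y)) ^ 2
        + (deriv (fun y' => c₄ * x + c₅ * y' + c₆) y - deriv (fun x' => c₁ * x' + c₂ * y + c₃) x)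
          * (y / (x - y))
        - ((c₁ * x + c₂ * y + c₃) * deriv (fun x' => y / (x' - y)) x
          + (c₄ * x + c₅ * y + c₆) * deriv (fun y' => y' / (x - y')) y)
      = (-2 * c₄ * (x * y) + (c₁ + c₄ - c₅) * y ^ 2 + c₃ * y - c₆ * x) / (x - y) ^ 2 := by
  simp only [deriv_add_const', deriv_const_mul_id', deriv_const_add',
    deriv_div_sub_left hxy, deriv_div_sub_right hxy]
  field_simp [sub_ne_zero.2 hxy]
  ring

/-- If ξ = c₁x + c₂y + c₃ and η = c₄x + c₅y + c₆ satisfy the linearized symmetry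
condition for h(x,y) = y/(x−y) for all (x,y) with x ≠ y and y ≠ 0, then
c₃ = c₄ = c₆ = 0 and c₁ = c₅. -/
theorem lsc_ansatz_y_over_x_minus_y (c₁ c₂ c₃ c₄ c₅ c₆ : ℝ)
    (ξ : ℝ → ℝ → ℝ) (η : ℝ → ℝ → ℝ) (h : ℝ → ℝ → ℝ)
    (hξ : ξ = fun x y => c₁ * x + c₂ * y + c₃)
    (hη : η = fun x y => c₄ * x + c₅ * y + c₆)
    (hh : h = fun x y => y / (x - y))
    (hlsc : ∀ x y : ℝ, x ≠ y → y ≠ 0 →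
      deriv (fun x' => η x' y) x - deriv (fun y' => ξ x y') y * (h x y) ^ 2
        + (deriv (fun y' => η x y') y - deriv (fun x' => ξ x' y) x) * h x y
        - (ξ x y * deriv (fun x' => h x' y) x + η x y * deriv (fun y' => h x y') y) = 0) :
    c₃ = 0 ∧ c₄ = 0 ∧ c₆ = 0 ∧ c₁ = c₅ := by
  subst hξ hη hh
  have hP : ∀ x y : ℝ, x ≠ y → y ≠ 0 →
      -2 * c₄ * (x * y) + (c₁ + c₄ - c₅) * y ^ 2 + c₃ * y + -c₆ * x = 0 := by
    intro x y hxy hy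
    have hcond := hlsc x y hxy hy
    beta_reduce at hcond
    rw [linearizedSymmetry_affine_y_div_sub_eq c₁ c₂ c₃ c₄ c₅ c₆ hxy, div_eq_zero_iff] at hcond
    linear_combination hcond.resolve_right (pow_ne_zero 2 (sub_ne_zero.2 hxy))
  obtain ⟨h₄, h₁₅, h₃, h₆⟩ := coeffs_eq_zero_of_forall_ne_of_ne_zero hP
  refine ⟨h₃, ?_, neg_eq_zero.1 h₆, ?_⟩ <;> linarith
end
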